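/- arXiv:1605.02444 — 3 statements merged into one kernel-verified Lean document; each statement's English description precedes it below -/
import Mathlib

section
/- If (A, ·, R) is a Rota–Baxter algebra of weight 1 (i.e., R(x)R(y) = R(R(x)y + xR(y) + xy)), then the products x ≺ y := xR(y), x ≻ y := R(x)y, x • y := xy make A a noncommutative quasi-shuffle algebra. -/
/-- If `(A, ·, R)` is a Rota–Baxter algebra of weight 1, then
`x ≺ y := x·R(y)`, `x ≻ y := R(x)·y`, `x • y := x·y` make `A` a
noncommutative quasi-shuffle (tridendriform) algebra. -/
theorem rotaBaxter_gives_NQSh (k A : Type) [Field k] [Ring A] [Algebra k A]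
    (R : A →ₗ[k] A)
    (hR : ∀ x y : A, R x * R y = R (R x * y + x * R y + x * y)) :
    ∀ x y z : A,
      -- • is associative
      ((x * y) * z = x * (y * z)) ∧
      -- (x≺y)≺z = x≺(y⋆z)
      ((x * R y) * R z = x * R (y * R z + R y * z + y * z)) ∧
      -- (x≻y)≺z = x≻(y≺z)
      ((R x * y) * R z = R x * (y * R z)) ∧
      -- (x⋆y)≻z = x≻(y≻z)
      (R (x * R y + R x * y + x * y) * z = R x * (R y * z)) ∧
      -- (x≺y)•z = x•(y≻z)
      ((x * R y) * z = x * (R y * z)) ∧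
      -- (x≻y)•z = x≻(y•z)
      ((R x * y) * z = R x * (y * z)) ∧
      -- (x•y)≺z = x•(y≻z)
      ((x * y) * R z = x * (y * R z)) := by
  intro x y z
  refine ⟨mul_assoc .., ?_, mul_assoc .., ?_, mul_assoc .., mul_assoc .., mul_assoc ..⟩
  · rw [mul_assoc, hR y z, show R y * z + y * R z + y * z = y * R z + R y * z + y * z by rw [add_comm (R y * z)]]
  · rw [show x * R y + R x * y + x * y = R x * y + x * R y + x * y by rw [add_comm (x * R y)], ← hR, mul_assoc]
end

section
/- Hoffman's products on the positive part of the tensor algebra over an associative (non-unital) algebra V, defined inductively by av ≺ bw = a(v ⧢ bw), av ≻ bw = b(av ⧢ w), av • bw = (a·b)(v ⧢ w) for letters a,b ∈ V and words v,w (where ⧢ = ≺ + ≻ + • is the quasi-shuffle product, with the empty word acting as unit for ⧢), make T^+(V) into a noncommutative quasi-shuffle algebra. -/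
open Finsupp TensorProduct

noncomputable section

variable (k : Type) [Field k] (V : Type)

/-- The free `k`-module on the set of words with letters in `V`
(a model of the tensor module `T(V)`; pure tensors of elements of `V`
correspond to the basis vectors indexed by lists). -/
abbrev TW := List V →₀ k

variable {k V} in
/-- The basis vector of a word. -/
def sg (w : List V) : TW k V := Finsupp.single w 1

/-- Linear extension of a word-indexed family. -/
def ext1 (f : List V → TW k V) : TW k V →ₗ[k] TW k V :=
  Finsupp.lsum k fun w => LinearMap.toSpanSingleton k _ (f w)

/-- Bilinear extension of a map defined on pairs of words. -/
def ext2 (f : List V → List V → TW k V) : TW k V →ₗ[k] TW k V →ₗ[k] TW k V :=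
  Finsupp.lsum k fun v => LinearMap.toSpanSingleton k _
    (Finsupp.lsum k fun w => LinearMap.toSpanSingleton k (TW k V) (f v w))

variable (mul : V → V → V)

/-- Hoffman's quasi-shuffle product `⧢` on words:
`1 ⧢ w = w = w ⧢ 1` and `av ⧢ bw = a(v ⧢ bw) + b(av ⧢ w) + (a·b)(v ⧢ w)`. -/
def qshW : List V → List V → TW k V
  | [], w => sg w
  | a::v, [] => sg (a::v)
  | a::v, b::w =>
      (qshW v (b::w)).mapDomain (List.cons a) +
      (qshW (a::v) w).mapDomain (List.cons b) +
      (qshW v w).mapDomain (List.cons (mul a b))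
  termination_by v w => v.length + w.length

/-- Hoffman's half-product `av ≺ bw = a(v ⧢ bw)`, with `x ≺ 1 = x`, `1 ≺ x = 0`. -/
def precW : List V → List V → TW k V
  | [], _ => 0
  | a::v, w => (qshW k V mul v w).mapDomain (List.cons a)

/-- Hoffman's half-product `av ≻ bw = b(av ⧢ w)`, with `1 ≻ x = x`, `x ≻ 1 = 0`. -/
def succW : List V → List V → TW k V
  | _, [] => 0
  | v, b::w => (qshW k V mul v w).mapDomain (List.cons b)

/-- Hoffman's product `av • bw = (a·b)(v ⧢ w)`. -/
def bulW : List V → List V → TW k V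
  | [], _ => 0
  | _::_, [] => 0
  | a::v, b::w => (qshW k V mul v w).mapDomain (List.cons (mul a b))

def qshL : TW k V →ₗ[k] TW k V →ₗ[k] TW k V := ext2 k V (qshW k V mul)
def precL : TW k V →ₗ[k] TW k V →ₗ[k] TW k V := ext2 k V (precW k V mul)
def succL : TW k V →ₗ[k] TW k V →ₗ[k] TW k V := ext2 k V (succW k V mul)
def bulL : TW k V →ₗ[k] TW k V →ₗ[k] TW k V := ext2 k V (bulW k V mul)

/-- Deconcatenation coproduct on a word. -/
def delW (w : List V) : TW k V ⊗[k] TW k V :=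
  ∑ i ∈ Finset.range (w.length + 1), sg (w.take i) ⊗ₜ[k] sg (w.drop i)

/-- The deconcatenation coproduct, linearly extended. -/
def delL : TW k V →ₗ[k] TW k V ⊗[k] TW k V :=
  Finsupp.lsum k fun w => LinearMap.toSpanSingleton k _ (delW k V w)

/-- Reduced deconcatenation coproduct on a word. -/
def rdelW (w : List V) : TW k V ⊗[k] TW k V :=
  ∑ i ∈ Finset.Ioo 0 w.length, sg (w.take i) ⊗ₜ[k] sg (w.drop i)

/-- The reduced deconcatenation coproduct, linearly extended. -/
def rdelL : TW k V →ₗ[k] TW k V ⊗[k] TW k V :=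
  Finsupp.lsum k fun w => LinearMap.toSpanSingleton k _ (rdelW k V w)

/-- The augmentation ideal `T⁺(V)`: the span of the nonempty words. -/
def Tplus : Submodule k (TW k V) :=
  Submodule.span k {x | ∃ w : List V, w ≠ [] ∧ x = sg w}


section Aux
variable {N : Type} [AddCommMonoid N] [Module k N]

lemma eq_on_sg (F G : TW k V →ₗ[k] N) (h : ∀ w, F (sg w) = G (sg w)) : F = G := by
  refine Finsupp.lhom_ext' fun w => LinearMap.ext_ring ?_
  simpa [sg] using h w

end Aux

lemma bil_eq (F G : TW k V →ₗ[k] TW k V →ₗ[k] TW k V)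
    (h : ∀ v w, F (sg v) (sg w) = G (sg v) (sg w)) (x y : TW k V) : F x y = G x y := by
  have : F = G := eq_on_sg k V F G fun v => eq_on_sg k V _ _ (h v)
  rw [this]

def consL (a : V) : TW k V →ₗ[k] TW k V := Finsupp.lmapDomain k k (List.cons a)

lemma consL_sg (a : V) (w : List V) : consL k V a (sg w) = sg (a::w) := by
  simp [consL, sg, Finsupp.mapDomain_single]

lemma ext2_sg (f : List V → List V → TW k V) (v w : List V) :
    ext2 k V f (sg v) (sg w) = f v w := by
  simp [ext2, sg]

lemma qshL_sg (v w : List V) : qshL k V mul (sg v) (sg w) = qshW k V mul v w := ext2_sg k V _ v w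
lemma precL_sg (v w : List V) : precL k V mul (sg v) (sg w) = precW k V mul v w := ext2_sg k V _ v w
lemma succL_sg (v w : List V) : succL k V mul (sg v) (sg w) = succW k V mul v w := ext2_sg k V _ v w
lemma bulL_sg (v w : List V) : bulL k V mul (sg v) (sg w) = bulW k V mul v w := ext2_sg k V _ v w

lemma consL_mapDomain (a : V) (x : TW k V) : consL k V a x = x.mapDomain (List.cons a) := rfl

lemma prec_cons (a : V) (x y : TW k V) :
    precL k V mul (consL k V a x) y = consL k V a (qshL k V mul x y) := by
  have := bil_eq k V ((precL k V mul).comp (consL k V a))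
      ((qshL k V mul).compr₂ (consL k V a)) (fun v w => ?_) x y
  · simpa using this
  · simp only [LinearMap.comp_apply, LinearMap.compr₂_apply, consL_sg, qshL_sg, precL_sg]
    rw [precW, consL_mapDomain]

lemma succ_cons (b : V) (x y : TW k V) :
    succL k V mul x (consL k V b y) = consL k V b (qshL k V mul x y) := by
  have := bil_eq k V ((succL k V mul).compl₂ (consL k V b))
      ((qshL k V mul).compr₂ (consL k V b)) (fun v w => ?_) x y
  · simpa using this
  · simp only [LinearMap.compl₂_apply, LinearMap.compr₂_apply, consL_sg, qshL_sg, succL_sg]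
    rw [succW, consL_mapDomain]

lemma bul_cons (a b : V) (x y : TW k V) :
    bulL k V mul (consL k V a x) (consL k V b y) = consL k V (mul a b) (qshL k V mul x y) := by
  have := bil_eq k V (((bulL k V mul).comp (consL k V a)).compl₂ (consL k V b))
      ((qshL k V mul).compr₂ (consL k V (mul a b))) (fun v w => ?_) x y
  · simpa using this
  · simp only [LinearMap.comp_apply, LinearMap.compl₂_apply, LinearMap.compr₂_apply,
      consL_sg, qshL_sg, bulL_sg]
    rw [bulW, consL_mapDomain]

lemma qsh_cons (a b : V) (x y : TW k V) :
    qshL k V mul (consL k V a x) (consL k V b y) =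
      consL k V a (qshL k V mul x (consL k V b y)) +
      consL k V b (qshL k V mul (consL k V a x) y) +
      consL k V (mul a b) (qshL k V mul x y) := by
  have := bil_eq k V (((qshL k V mul).comp (consL k V a)).compl₂ (consL k V b))
      ((((qshL k V mul).compl₂ (consL k V b)).compr₂ (consL k V a)) +
       (((qshL k V mul).comp (consL k V a)).compr₂ (consL k V b)) +
       ((qshL k V mul).compr₂ (consL k V (mul a b)))) (fun v w => ?_) x y
  · simpa using this
  · simp only [LinearMap.add_apply, LinearMap.comp_apply, LinearMap.compl₂_apply,
      LinearMap.compr₂_apply, consL_sg, qshL_sg]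
    rw [qshW]
    simp only [consL_mapDomain]

lemma qsh_nil_left (y : TW k V) : qshL k V mul (sg []) y = y := by
  have : qshL k V mul (sg []) = LinearMap.id (R := k) (M := TW k V) :=
    eq_on_sg k V _ _ (fun w => by rw [qshL_sg, qshW]; rfl)
  rw [this]; rfl

lemma qsh_nil_right (x : TW k V) : qshL k V mul x (sg []) = x := by
  have : (qshL k V mul).flip (sg []) = LinearMap.id (R := k) (M := TW k V) :=
    eq_on_sg k V _ _ (fun w => by
      simp only [LinearMap.flip_apply, qshL_sg, LinearMap.id_apply]
      cases w <;> rw [qshW])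
  exact (LinearMap.congr_fun this x :)

lemma exp_left (a b c : V) (x y z : TW k V) :
    qshL k V mul (qshL k V mul (consL k V a x) (consL k V b y)) (consL k V c z) =
      consL k V a (qshL k V mul (qshL k V mul x (consL k V b y)) (consL k V c z)) +
      consL k V b (qshL k V mul (qshL k V mul (consL k V a x) y) (consL k V c z)) +
      consL k V (mul a b) (qshL k V mul (qshL k V mul x y) (consL k V c z)) +
      consL k V c (qshL k V mul (qshL k V mul (consL k V a x) (consL k V b y)) z) +
      consL k V (mul a c) (qshL k V mul (qshL k V mul x (consL k V b y)) z) +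
      consL k V (mul b c) (qshL k V mul (qshL k V mul (consL k V a x) y) z) +
      consL k V (mul (mul a b) c) (qshL k V mul (qshL k V mul x y) z) := by
  have hC : consL k V c (qshL k V mul (qshL k V mul (consL k V a x) (consL k V b y)) z) =
      consL k V c (qshL k V mul (consL k V a (qshL k V mul x (consL k V b y))) z) +
      consL k V c (qshL k V mul (consL k V b (qshL k V mul (consL k V a x) y)) z) +
      consL k V c (qshL k V mul (consL k V (mul a b) (qshL k V mul x y)) z) := by
    rw [qsh_cons]
    simp only [map_add, LinearMap.add_apply]
  rw [hC]
  conv_lhs => rw [qsh_cons]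
  simp only [map_add, LinearMap.add_apply]
  rw [qsh_cons, qsh_cons, qsh_cons]
  abel

lemma exp_right (a b c : V) (x y z : TW k V) :
    qshL k V mul (consL k V a x) (qshL k V mul (consL k V b y) (consL k V c z)) =
      consL k V a (qshL k V mul x (qshL k V mul (consL k V b y) (consL k V c z))) +
      consL k V b (qshL k V mul (consL k V a x) (qshL k V mul y (consL k V c z))) +
      consL k V c (qshL k V mul (consL k V a x) (qshL k V mul (consL k V b y) z)) +
      consL k V (mul a b) (qshL k V mul x (qshL k V mul y (consL k V c z))) +
      consL k V (mul a c) (qshL k V mul x (qshL k V mul (consL k V b y) z)) +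
      consL k V (mul b c) (qshL k V mul (consL k V a x) (qshL k V mul y z)) +
      consL k V (mul a (mul b c)) (qshL k V mul x (qshL k V mul y z)) := by
  have hA : consL k V a (qshL k V mul x (qshL k V mul (consL k V b y) (consL k V c z))) =
      consL k V a (qshL k V mul x (consL k V b (qshL k V mul y (consL k V c z)))) +
      consL k V a (qshL k V mul x (consL k V c (qshL k V mul (consL k V b y) z))) +
      consL k V a (qshL k V mul x (consL k V (mul b c) (qshL k V mul y z))) := by
    rw [qsh_cons]
    simp only [map_add]
  rw [hA]
  conv_lhs => rw [qsh_cons]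
  simp only [map_add]
  rw [qsh_cons, qsh_cons, qsh_cons]
  abel

lemma assocW (hm : ∀ a b c : V, mul (mul a b) c = mul a (mul b c)) :
    ∀ (n : ℕ) (u v w : List V), u.length + v.length + w.length ≤ n →
      qshL k V mul (qshL k V mul (sg u) (sg v)) (sg w) =
        qshL k V mul (sg u) (qshL k V mul (sg v) (sg w)) := by
  intro n
  induction n with
  | zero =>
    intro u v w h
    have hu : u = [] := by cases u <;> simp_all
    subst hu
    rw [qsh_nil_left, qsh_nil_left]
  | succ n ih =>
    intro u v w h
    obtain _ | ⟨a, u⟩ := u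
    · rw [qsh_nil_left, qsh_nil_left]
    obtain _ | ⟨b, v⟩ := v
    · rw [qsh_nil_right, qsh_nil_left]
    obtain _ | ⟨c, w⟩ := w
    · rw [qsh_nil_right, qsh_nil_right]
    · simp only [List.length_cons] at h
      simp only [← consL_sg]
      rw [exp_left, exp_right]
      simp only [consL_sg]
      rw [ih u (b::v) (c::w) (by simp only [List.length_cons]; omega),
          ih (a::u) v (c::w) (by simp only [List.length_cons]; omega),
          ih u v (c::w) (by simp only [List.length_cons]; omega),
          ih (a::u) (b::v) w (by simp only [List.length_cons]; omega),
          ih u (b::v) w (by simp only [List.length_cons]; omega),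
          ih (a::u) v w (by simp only [List.length_cons]; omega),
          ih u v w (by omega),
          hm a b c]
      abel

lemma qsh_assoc (hm : ∀ a b c : V, mul (mul a b) c = mul a (mul b c)) (x y z : TW k V) :
    qshL k V mul (qshL k V mul x y) z = qshL k V mul x (qshL k V mul y z) := by
  have := bil_eq k V ((qshL k V mul).compr₂ ((qshL k V mul).flip z))
      ((qshL k V mul).compl₂ ((qshL k V mul).flip z)) (fun u v => ?_) x y
  · simpa using this
  · simp only [LinearMap.compr₂_apply, LinearMap.compl₂_apply, LinearMap.flip_apply]
    have h2 : qshL k V mul (qshL k V mul (sg u) (sg v)) =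
        (qshL k V mul (sg u)).comp (qshL k V mul (sg v)) :=
      eq_on_sg k V _ _ (fun w => assocW k V mul hm (u.length + v.length + w.length) u v w le_rfl)
    exact (LinearMap.congr_fun h2 z :)

lemma sg_mem_Tplus {w : List V} (hw : w ≠ []) : sg w ∈ Tplus k V :=
  Submodule.subset_span ⟨w, hw, rfl⟩

lemma consL_mem (a : V) (x : TW k V) : consL k V a x ∈ Tplus k V := by
  induction x using Finsupp.induction_linear with
  | zero => simp only [map_zero]; exact (Tplus k V).zero_mem
  | add f g hf hg => rw [map_add]; exact (Tplus k V).add_mem hf hg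
  | single w c =>
    have : (Finsupp.single w c : TW k V) = c • sg w := by
      simp [sg, Finsupp.smul_single]
    rw [this, map_smul, consL_sg]
    exact (Tplus k V).smul_mem c (sg_mem_Tplus k V (by simp))

lemma mem2 (F : TW k V →ₗ[k] TW k V →ₗ[k] TW k V)
    (h : ∀ u v : List V, u ≠ [] → v ≠ [] → F (sg u) (sg v) ∈ Tplus k V)
    {x y : TW k V} (hx : x ∈ Tplus k V) (hy : y ∈ Tplus k V) : F x y ∈ Tplus k V := by
  induction hx using Submodule.span_induction with
  | mem x hx =>
    obtain ⟨u, hu, rfl⟩ := hx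
    induction hy using Submodule.span_induction with
    | mem y hy => obtain ⟨v, hv, rfl⟩ := hy; exact h u v hu hv
    | zero => simp only [map_zero]; exact (Tplus k V).zero_mem
    | add y z _ _ hy hz => rw [map_add]; exact (Tplus k V).add_mem hy hz
    | smul c y _ hy => rw [map_smul]; exact (Tplus k V).smul_mem c hy
  | zero => simp only [map_zero, LinearMap.zero_apply]; exact (Tplus k V).zero_mem
  | add x z _ _ hx hz =>
    rw [map_add, LinearMap.add_apply]; exact (Tplus k V).add_mem hx hz
  | smul c x _ hx =>
    rw [map_smul, LinearMap.smul_apply]; exact (Tplus k V).smul_mem c hx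

lemma gen (A B C D : TW k V →ₗ[k] TW k V →ₗ[k] TW k V)
    (h : ∀ u v w : List V, u ≠ [] → v ≠ [] → w ≠ [] →
      A (B (sg u) (sg v)) (sg w) = C (sg u) (D (sg v) (sg w)))
    {x y z : TW k V} (hx : x ∈ Tplus k V) (hy : y ∈ Tplus k V) (hz : z ∈ Tplus k V) :
    A (B x y) z = C x (D y z) := by
  induction hx using Submodule.span_induction with
  | mem x hx =>
    obtain ⟨u, hu, rfl⟩ := hx
    induction hy using Submodule.span_induction with
    | mem y hy =>
      obtain ⟨v, hv, rfl⟩ := hy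
      induction hz using Submodule.span_induction with
      | mem z hz => obtain ⟨w, hw, rfl⟩ := hz; exact h u v w hu hv hw
      | zero => simp
      | add z₁ z₂ _ _ h₁ h₂ => simp only [map_add, h₁, h₂]
      | smul c z _ h₁ => simp only [map_smul, h₁]
    | zero => simp
    | add y₁ y₂ _ _ h₁ h₂ =>
        simp only [map_add, LinearMap.add_apply, h₁, h₂]
    | smul c y _ h₁ =>
        simp only [map_smul, LinearMap.smul_apply, h₁]
  | zero => simp
  | add x₁ x₂ _ _ h₁ h₂ =>
      simp only [map_add, LinearMap.add_apply, h₁, h₂]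
  | smul c x _ h₁ =>
      simp only [map_smul, LinearMap.smul_apply, h₁]

/-- Hoffman's products make `T⁺(V)` a noncommutative quasi-shuffle algebra,
for `V` an associative non-unital algebra. -/
theorem hoffman_NQSh (k : Type) [Field k] (V : Type) [NonUnitalRing V] [Module k V] :
    letI mul : V → V → V := (· * ·)
    letI p := precL k V mul; letI s := succL k V mul; letI b := bulL k V mul
    -- T⁺(V) is stable under the three products
    (∀ x y : TW k V, x ∈ Tplus k V → y ∈ Tplus k V →
        p x y ∈ Tplus k V ∧ s x y ∈ Tplus k V ∧ b x y ∈ Tplus k V) ∧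
    -- the tridendriform axioms hold on T⁺(V)
    (∀ x y z : TW k V, x ∈ Tplus k V → y ∈ Tplus k V → z ∈ Tplus k V →
      (b (b x y) z = b x (b y z)) ∧
      (p (p x y) z = p x (p y z + s y z + b y z)) ∧
      (p (s x y) z = s x (p y z)) ∧
      (s (p x y + s x y + b x y) z = s x (s y z)) ∧
      (b (p x y) z = b x (s y z)) ∧
      (b (s x y) z = s x (b y z)) ∧
      (p (b x y) z = b x (p y z))) := by
  set mul : V → V → V := (· * ·) with hmul
  have hm : ∀ a b c : V, mul (mul a b) c = mul a (mul b c) := fun a b c => mul_assoc a b c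
  constructor
  · intro x y hx hy
    refine ⟨mem2 k V _ (fun u v hu hv => ?_) hx hy,
            mem2 k V _ (fun u v hu hv => ?_) hx hy,
            mem2 k V _ (fun u v hu hv => ?_) hx hy⟩ <;>
    · obtain ⟨a, u, rfl⟩ := List.exists_cons_of_ne_nil hu
      obtain ⟨b, v, rfl⟩ := List.exists_cons_of_ne_nil hv
      simp only [← consL_sg, prec_cons, succ_cons, bul_cons]
      exact consL_mem k V _ _
  · intro x y z hx hy hz
    refine ⟨gen k V _ _ _ _ (fun u v w hu hv hw => ?_) hx hy hz,
            ?_,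
            gen k V _ _ _ _ (fun u v w hu hv hw => ?_) hx hy hz,
            ?_,
            gen k V _ _ _ _ (fun u v w hu hv hw => ?_) hx hy hz,
            gen k V _ _ _ _ (fun u v w hu hv hw => ?_) hx hy hz,
            gen k V _ _ _ _ (fun u v w hu hv hw => ?_) hx hy hz⟩
    -- (i) b (b x y) z = b x (b y z)
    · obtain ⟨a, u, rfl⟩ := List.exists_cons_of_ne_nil hu
      obtain ⟨b, v, rfl⟩ := List.exists_cons_of_ne_nil hv
      obtain ⟨c, w, rfl⟩ := List.exists_cons_of_ne_nil hw
      simp only [← consL_sg, bul_cons]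
      rw [hm, qsh_assoc k V mul hm]
    -- (ii) p (p x y) z = p x ((p+s+b) y z)
    · have := gen k V (precL k V mul) (precL k V mul) (precL k V mul)
        (precL k V mul + succL k V mul + bulL k V mul) (fun u v w hu hv hw => ?_) hx hy hz
      · simpa only [LinearMap.add_apply] using this
      · obtain ⟨a, u, rfl⟩ := List.exists_cons_of_ne_nil hu
        obtain ⟨b, v, rfl⟩ := List.exists_cons_of_ne_nil hv
        obtain ⟨c, w, rfl⟩ := List.exists_cons_of_ne_nil hw
        simp only [← consL_sg, LinearMap.add_apply, prec_cons, succ_cons, bul_cons]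
        rw [← qsh_cons, qsh_assoc k V mul hm]
    -- (iii) p (s x y) z = s x (p y z)
    · obtain ⟨a, u, rfl⟩ := List.exists_cons_of_ne_nil hu
      obtain ⟨b, v, rfl⟩ := List.exists_cons_of_ne_nil hv
      obtain ⟨c, w, rfl⟩ := List.exists_cons_of_ne_nil hw
      simp only [← consL_sg, prec_cons, succ_cons]
      rw [qsh_assoc k V mul hm]
    -- (iv) s ((p+s+b) x y) z = s x (s y z)
    · have := gen k V (succL k V mul)
        (precL k V mul + succL k V mul + bulL k V mul) (succL k V mul) (succL k V mul)
        (fun u v w hu hv hw => ?_) hx hy hz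
      · simpa only [LinearMap.add_apply, map_add, LinearMap.add_apply] using this
      · obtain ⟨a, u, rfl⟩ := List.exists_cons_of_ne_nil hu
        obtain ⟨b, v, rfl⟩ := List.exists_cons_of_ne_nil hv
        obtain ⟨c, w, rfl⟩ := List.exists_cons_of_ne_nil hw
        simp only [← consL_sg, LinearMap.add_apply, prec_cons, succ_cons, bul_cons]
        rw [← qsh_cons, qsh_assoc k V mul hm]
    -- (v) b (p x y) z = b x (s y z)
    · obtain ⟨a, u, rfl⟩ := List.exists_cons_of_ne_nil hu
      obtain ⟨b, v, rfl⟩ := List.exists_cons_of_ne_nil hv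
      obtain ⟨c, w, rfl⟩ := List.exists_cons_of_ne_nil hw
      simp only [← consL_sg, prec_cons, succ_cons, bul_cons]
      rw [qsh_assoc k V mul hm]
    -- (vi) b (s x y) z = s x (b y z)
    · obtain ⟨a, u, rfl⟩ := List.exists_cons_of_ne_nil hu
      obtain ⟨b, v, rfl⟩ := List.exists_cons_of_ne_nil hv
      obtain ⟨c, w, rfl⟩ := List.exists_cons_of_ne_nil hw
      simp only [← consL_sg, succ_cons, bul_cons]
      rw [qsh_assoc k V mul hm]
    -- (vii) p (b x y) z = b x (p y z)
    · obtain ⟨a, u, rfl⟩ := List.exists_cons_of_ne_nil hu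
      obtain ⟨b, v, rfl⟩ := List.exists_cons_of_ne_nil hv
      obtain ⟨c, w, rfl⟩ := List.exists_cons_of_ne_nil hw
      simp only [← consL_sg, prec_cons, bul_cons]
      rw [qsh_assoc k V mul hm]
end
end

section
/- Let A be a coassociative non-counital coalgebra whose coproduct Δ̃ is locally conilpotent (A = ∪_n Ker(Δ̃^(n))), and let B be a noncommutative quasi-shuffle algebra. For any f ∈ Lin(A,B) there exists a unique π_f ∈ Lin(A,B) such that f = π_f + π_f ≺ f, where (g ≺ h)(a) := g(a^(1)) ≺ h(a^(2)) using Δ̃. -/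
open TensorProduct

noncomputable section

/-- The coradical filtration of a (non-counital) coalgebra:
`F₀ = 0`, `F_{n+1} = {a | Δ̃(a) ∈ F_n ⊗ F_n}`; `F_n` is the kernel of the `n`-th
iterated reduced coproduct. -/
def corad {k A : Type} [Field k] [AddCommGroup A] [Module k A]
    (Δ : A →ₗ[k] A ⊗[k] A) : ℕ → Submodule k A
  | 0 => ⊥
  | n + 1 => Submodule.comap Δ (LinearMap.range
      (TensorProduct.map (corad Δ n).subtype (corad Δ n).subtype))

/-- Convolution-type product on `Lin(A,B)`. -/
def convProd {k A B : Type} [Field k] [AddCommGroup A] [Module k A]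
    [AddCommGroup B] [Module k B]
    (Δ : A →ₗ[k] A ⊗[k] A) (m : B →ₗ[k] B →ₗ[k] B) (f g : A →ₗ[k] B) : A →ₗ[k] B :=
  TensorProduct.lift m ∘ₗ TensorProduct.map f g ∘ₗ Δ

section Aux

variable {k A B : Type} [Field k] [AddCommGroup A] [Module k A]
    [AddCommGroup B] [Module k B] (Δ : A →ₗ[k] A ⊗[k] A)

lemma corad_le_succ : ∀ n, corad Δ n ≤ corad Δ (n + 1)
  | 0 => by simp [corad]
  | n + 1 => by
    intro a ha
    have hc : (corad Δ (n + 1)).subtype ∘ₗ Submodule.inclusion (corad_le_succ n)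
        = (corad Δ n).subtype := by ext x; rfl
    have hr : LinearMap.range (TensorProduct.map (corad Δ n).subtype (corad Δ n).subtype)
        ≤ LinearMap.range
          (TensorProduct.map (corad Δ (n + 1)).subtype (corad Δ (n + 1)).subtype) := by
      rw [← hc, TensorProduct.map_comp]
      exact LinearMap.range_comp_le_range _ _
    show a ∈ Submodule.comap Δ _
    exact Submodule.comap_mono hr ha

lemma corad_mono : Monotone (corad Δ) :=
  monotone_nat_of_le_succ (corad_le_succ Δ)

variable (prec : B →ₗ[k] B →ₗ[k] B)

lemma convProd_congr (n : ℕ) (g₁ g₂ h : A →ₗ[k] B)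
    (hg : ∀ x ∈ corad Δ n, g₁ x = g₂ x) :
    ∀ a ∈ corad Δ (n + 1), convProd Δ prec g₁ h a = convProd Δ prec g₂ h a := by
  intro a ha
  have ha' : Δ a ∈ LinearMap.range
      (TensorProduct.map (corad Δ n).subtype (corad Δ n).subtype) := ha
  obtain ⟨t, ht⟩ := ha'
  have key : ∀ gi : A →ₗ[k] B, TensorProduct.map gi h (Δ a)
      = TensorProduct.map (gi ∘ₗ (corad Δ n).subtype) (h ∘ₗ (corad Δ n).subtype) t := by
    intro gi
    rw [← ht, TensorProduct.map_comp, LinearMap.comp_apply]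
  have e : g₁ ∘ₗ (corad Δ n).subtype = g₂ ∘ₗ (corad Δ n).subtype := by
    ext x; exact hg x x.2
  simp only [convProd, LinearMap.comp_apply, key, e]

/-- The approximating sequence: `g 0 = 0`, `g (n+1) = f - g n ≺ f`. -/
def gseq (f : A →ₗ[k] B) : ℕ → (A →ₗ[k] B)
  | 0 => 0
  | n + 1 => f - convProd Δ prec (gseq f n) f

lemma gseq_stab_succ (f : A →ₗ[k] B) :
    ∀ n, ∀ a ∈ corad Δ n, gseq Δ prec f (n + 1) a = gseq Δ prec f n a := by
  intro n
  induction n with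
  | zero =>
    intro a ha
    have : a = 0 := by simpa [corad] using ha
    simp [this]
  | succ n ih =>
    intro a ha
    show (f - convProd Δ prec (gseq Δ prec f (n + 1)) f) a
        = (f - convProd Δ prec (gseq Δ prec f n) f) a
    simp only [LinearMap.sub_apply]
    rw [convProd_congr Δ prec n _ (gseq Δ prec f n) f ih a ha]

lemma gseq_stab (f : A →ₗ[k] B) :
    ∀ m n, n ≤ m → ∀ a ∈ corad Δ n, gseq Δ prec f m a = gseq Δ prec f n a := by
  intro m
  induction m with
  | zero => intro n hn a ha; rw [Nat.le_zero.mp hn]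
  | succ m ih =>
    intro n hn a ha
    rcases Nat.lt_or_ge n (m + 1) with h | h
    · have hnm : n ≤ m := Nat.lt_succ_iff.mp h
      rw [gseq_stab_succ Δ prec f m a (corad_mono Δ hnm ha), ih n hnm a ha]
    · rw [Nat.le_antisymm hn h]

lemma gseq_eq_of_mem (f : A →ₗ[k] B) {p q : ℕ} {a : A}
    (hp : a ∈ corad Δ p) (hq : a ∈ corad Δ q) :
    gseq Δ prec f p a = gseq Δ prec f q a := by
  rw [← gseq_stab Δ prec f (max p q) p (le_max_left _ _) a hp,
      gseq_stab Δ prec f (max p q) q (le_max_right _ _) a hq]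

end Aux

/-- If `A` is a coassociative non-counital coalgebra with locally conilpotent
coproduct and `B` a noncommutative quasi-shuffle algebra, then for any
`f ∈ Lin(A,B)` there is a unique `π_f ∈ Lin(A,B)` with `f = π_f + π_f ≺ f`. -/
theorem exists_unique_pi (k A B : Type) [Field k] [AddCommGroup A] [Module k A]
    [AddCommGroup B] [Module k B]
    (Δ : A →ₗ[k] A ⊗[k] A)
    (hcoassoc : (TensorProduct.assoc k A A A).toLinearMap ∘ₗ
        (TensorProduct.map Δ LinearMap.id) ∘ₗ Δ = (TensorProduct.map LinearMap.id Δ) ∘ₗ Δ)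
    (hconil : ∀ a : A, ∃ n : ℕ, a ∈ corad Δ n)
    (prec succ bul : B →ₗ[k] B →ₗ[k] B)
    (hbul : ∀ x y z : B, bul (bul x y) z = bul x (bul y z))
    (h1 : ∀ x y z : B, prec (prec x y) z = prec x (prec y z + succ y z + bul y z))
    (h2 : ∀ x y z : B, prec (succ x y) z = succ x (prec y z))
    (h3 : ∀ x y z : B, succ (prec x y + succ x y + bul x y) z = succ x (succ y z))
    (h5 : ∀ x y z : B, bul (prec x y) z = bul x (succ y z))
    (h6 : ∀ x y z : B, bul (succ x y) z = succ x (bul y z))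
    (h7 : ∀ x y z : B, prec (bul x y) z = bul x (prec y z))
    (f : A →ₗ[k] B) :
    ∃! π : A →ₗ[k] B, f = π + convProd Δ prec π f := by
  classical
  set g : ℕ → (A →ₗ[k] B) := gseq Δ prec f with hg
  -- the candidate, defined pointwise
  let nf : A → ℕ := fun a => Classical.choose (hconil a)
  have hnf : ∀ a, a ∈ corad Δ (nf a) := fun a => Classical.choose_spec (hconil a)
  let πfun : A → B := fun a => g (nf a) a
  have πfun_eq : ∀ (n : ℕ) (a : A), a ∈ corad Δ n → πfun a = g n a := fun n a ha =>
    gseq_eq_of_mem Δ prec f (hnf a) ha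
  have hadd : ∀ a b, πfun (a + b) = πfun a + πfun b := by
    intro a b
    set N := max (nf a) (max (nf b) (nf (a + b))) with hN
    have hab : a + b ∈ corad Δ N :=
      Submodule.add_mem _ (corad_mono Δ (le_max_left _ _) (hnf a))
        (corad_mono Δ ((le_max_left _ _).trans (le_max_right _ _)) (hnf b))
    rw [πfun_eq N (a + b) hab, map_add,
      ← πfun_eq N a (corad_mono Δ (le_max_left _ _) (hnf a)),
      ← πfun_eq N b (corad_mono Δ ((le_max_left _ _).trans (le_max_right _ _)) (hnf b))]
  have hsmul : ∀ (c : k) (a : A), πfun (c • a) = c • πfun a := by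
    intro c a
    have hca : c • a ∈ corad Δ (nf a) := Submodule.smul_mem _ c (hnf a)
    rw [πfun_eq (nf a) (c • a) hca, map_smul]
  let π : A →ₗ[k] B :=
    { toFun := πfun
      map_add' := hadd
      map_smul' := hsmul }
  have π_eq : ∀ (n : ℕ) (a : A), a ∈ corad Δ n → π a = g n a := πfun_eq
  refine ⟨π, ?_, ?_⟩
  · ext a
    obtain ⟨n, hn⟩ := hconil a
    have hn1 : a ∈ corad Δ (n + 1) := corad_le_succ Δ n hn
    have e1 : π a = g (n + 2) a := by
      rw [π_eq (n + 1) a hn1, ← gseq_stab_succ Δ prec f (n + 1) a hn1]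
    have e2 : convProd Δ prec π f a = convProd Δ prec (g (n + 1)) f a := by
      refine convProd_congr Δ prec n π (g (n + 1)) f ?_ a hn1
      intro x hx
      rw [π_eq n x hx, ← gseq_stab_succ Δ prec f n x hx]
    have e3 : g (n + 2) a = f a - convProd Δ prec (g (n + 1)) f a := rfl
    simp only [LinearMap.add_apply, e1, e2, e3]
    abel
  · intro π₂ hπ₂
    have hπ₁ : f = π + convProd Δ prec π f := by
      ext a
      obtain ⟨n, hn⟩ := hconil a
      have hn1 : a ∈ corad Δ (n + 1) := corad_le_succ Δ n hn
      have e1 : π a = g (n + 2) a := by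
        rw [π_eq (n + 1) a hn1, ← gseq_stab_succ Δ prec f (n + 1) a hn1]
      have e2 : convProd Δ prec π f a = convProd Δ prec (g (n + 1)) f a := by
        refine convProd_congr Δ prec n π (g (n + 1)) f ?_ a hn1
        intro x hx
        rw [π_eq n x hx, ← gseq_stab_succ Δ prec f n x hx]
      have e3 : g (n + 2) a = f a - convProd Δ prec (g (n + 1)) f a := rfl
      simp only [LinearMap.add_apply, e1, e2, e3]
      abel
    -- uniqueness by induction along the filtration
    have key : ∀ n, ∀ a ∈ corad Δ n, π₂ a = π a := by
      intro n
      induction n with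
      | zero =>
        intro a ha
        have : a = 0 := by simpa [corad] using ha
        simp [this]
      | succ n ih =>
        intro a ha
        have e2 : π₂ a = f a - convProd Δ prec π₂ f a := by
          have := congrArg (fun F : A →ₗ[k] B => F a) hπ₂
          simp only [LinearMap.add_apply] at this
          rw [this]; abel
        have e1 : π a = f a - convProd Δ prec π f a := by
          have := congrArg (fun F : A →ₗ[k] B => F a) hπ₁
          simp only [LinearMap.add_apply] at this
          rw [this]; abel
        rw [e1, e2, convProd_congr Δ prec n π₂ π f ih a ha]
    ext a
    obtain ⟨n, hn⟩ := hconil a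
    exact key n a hn

end
end
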